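/- arXiv:1211.5727 — 7 statements merged into one kernel-verified Lean document; each statement's English description precedes it below -/
import Mathlib

section
/- Let u, v : ℝ × ℝ → ℝ be smooth functions, m = u - u_xx and n = v - v_xx. If u and v satisfy the two-component system m_t = bu_x + ½[m(uv - u_x v_x)]_x - ½ m(u v_x - u_x v) and n_t = bv_x + ½[n(uv - u_x v_x)]_x + ½ n(u v_x - u_x v) with b = 0, then (√(-mn))_t = (½√(-mn)(uv - u_x v_x))_x wherever mn < 0. -/
noncomputable section

/-- Partial derivative in the first (space) variable. -/
def pd1 (f : ℝ → ℝ → ℝ) : ℝ → ℝ → ℝ := fun x t => deriv (fun y => f y t) x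

/-- Partial derivative in the second (time) variable. -/
def pd2 (f : ℝ → ℝ → ℝ) : ℝ → ℝ → ℝ := fun x t => deriv (fun s => f x s) t

/-- The momentum variable `m = u - u_xx`. -/
def mom (u : ℝ → ℝ → ℝ) : ℝ → ℝ → ℝ := fun x t => u x t - pd1 (pd1 u) x t

/-- First component equation of the two-component cubic Camassa–Holm system at a point:
`m_t = b u_x + ½ [m(uv - u_x v_x)]_x - ½ m (u v_x - u_x v)`, `m = u - u_xx`. -/
def Eq1 (b : ℝ) (u v : ℝ → ℝ → ℝ) (x t : ℝ) : Prop :=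
  pd2 (mom u) x t =
    b * pd1 u x t
      + (1 / 2) * pd1 (fun x t => mom u x t * (u x t * v x t - pd1 u x t * pd1 v x t)) x t
      - (1 / 2) * mom u x t * (u x t * pd1 v x t - pd1 u x t * v x t)

/-- Second component equation of the two-component cubic Camassa–Holm system at a point:
`n_t = b v_x + ½ [n(uv - u_x v_x)]_x + ½ n (u v_x - u_x v)`, `n = v - v_xx`. -/
def Eq2 (b : ℝ) (u v : ℝ → ℝ → ℝ) (x t : ℝ) : Prop :=
  pd2 (mom v) x t =
    b * pd1 v x t
      + (1 / 2) * pd1 (fun x t => mom v x t * (u x t * v x t - pd1 u x t * pd1 v x t)) x t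
      + (1 / 2) * mom v x t * (u x t * pd1 v x t - pd1 u x t * v x t)

/-- The full two-component cubic Camassa–Holm system with linear dispersion `b`. -/
def TwoCompSys (b : ℝ) (u v : ℝ → ℝ → ℝ) : Prop :=
  (∀ x t : ℝ, Eq1 b u v x t) ∧ (∀ x t : ℝ, Eq2 b u v x t)

open Function

/-- Spatial slice of a jointly smooth function is smooth. -/
private lemma curry1 {f : ℝ → ℝ → ℝ} (hf : ContDiff ℝ (⊤ : ℕ∞) (uncurry f)) (t : ℝ) :
    ContDiff ℝ (⊤ : ℕ∞) (fun y => f y t) :=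
  hf.comp (ContDiff.prodMk contDiff_id contDiff_const : ContDiff ℝ (⊤ : ℕ∞) (fun y : ℝ => (y, t)))

private lemma curry2 {f : ℝ → ℝ → ℝ} (hf : ContDiff ℝ (⊤ : ℕ∞) (uncurry f)) (x : ℝ) :
    ContDiff ℝ (⊤ : ℕ∞) (fun s => f x s) :=
  hf.comp (ContDiff.prodMk contDiff_const contDiff_id : ContDiff ℝ (⊤ : ℕ∞) (fun s : ℝ => (x, s)))

private lemma hd1 {f : ℝ → ℝ → ℝ} (hf : ContDiff ℝ (⊤ : ℕ∞) (uncurry f)) (x t : ℝ) :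
    HasDerivAt (fun y => f y t) (pd1 f x t) x :=
  ((curry1 hf t).differentiable (by simp) x).hasDerivAt

private lemma hd2 {f : ℝ → ℝ → ℝ} (hf : ContDiff ℝ (⊤ : ℕ∞) (uncurry f)) (x t : ℝ) :
    HasDerivAt (fun s => f x s) (pd2 f x t) t :=
  ((curry2 hf x).differentiable (by simp) t).hasDerivAt

/-- The spatial partial derivative of a jointly smooth function is jointly smooth. -/
private lemma smooth_pd1 {f : ℝ → ℝ → ℝ} (hf : ContDiff ℝ (⊤ : ℕ∞) (uncurry f)) :
    ContDiff ℝ (⊤ : ℕ∞) (uncurry (pd1 f)) := by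
  have key : ∀ x t : ℝ, pd1 f x t = fderiv ℝ (uncurry f) (x, t) ((1 : ℝ), (0 : ℝ)) := by
    intro x t
    have h1 : HasDerivAt (fun y : ℝ => (y, t)) ((1 : ℝ), (0 : ℝ)) x :=
      (hasDerivAt_id x).prodMk (hasDerivAt_const x t)
    have h2 := ((hf.differentiable (by simp) (x, t)).hasFDerivAt).comp_hasDerivAt x h1
    exact h2.deriv
  have heq : uncurry (pd1 f) = fun p : ℝ × ℝ => fderiv ℝ (uncurry f) p ((1 : ℝ), (0 : ℝ)) := by
    funext p; exact key p.1 p.2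
  rw [heq]
  exact (hf.fderiv_right (by simp)).clm_apply contDiff_const

private lemma smooth_mom {u : ℝ → ℝ → ℝ} (hu : ContDiff ℝ (⊤ : ℕ∞) (uncurry u)) :
    ContDiff ℝ (⊤ : ℕ∞) (uncurry (mom u)) :=
  hu.sub (smooth_pd1 (smooth_pd1 hu))

/-- The "velocity" quantity `uv - u_x v_x`. -/
private def Kf (u v : ℝ → ℝ → ℝ) : ℝ → ℝ → ℝ :=
  fun x t => u x t * v x t - pd1 u x t * pd1 v x t

private lemma smooth_Kf {u v : ℝ → ℝ → ℝ} (hu : ContDiff ℝ (⊤ : ℕ∞) (uncurry u))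
    (hv : ContDiff ℝ (⊤ : ℕ∞) (uncurry v)) : ContDiff ℝ (⊤ : ℕ∞) (uncurry (Kf u v)) :=
  (hu.mul hv).sub ((smooth_pd1 hu).mul (smooth_pd1 hv))

/-- For smooth solutions of the two-component cubic Camassa–Holm system with `b = 0`,
wherever `m·n < 0` the conserved density `ρ₀ = √(-mn)` satisfies the local conservation law
`(√(-mn))_t = (½ √(-mn) (uv - u_x v_x))_x`. -/
theorem conservation_law_sqrt_neg_mn (u v : ℝ → ℝ → ℝ)
    (hu : ContDiff ℝ (⊤ : ℕ∞) (Function.uncurry u)) (hv : ContDiff ℝ (⊤ : ℕ∞) (Function.uncurry v))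
    (hsys : TwoCompSys 0 u v) :
    ∀ x t : ℝ, mom u x t * mom v x t < 0 →
      deriv (fun s => Real.sqrt (-(mom u x s * mom v x s))) t =
        deriv (fun y =>
          (1 / 2) * Real.sqrt (-(mom u y t * mom v y t)) *
            (u y t * v y t - pd1 u y t * pd1 v y t)) x := by
  obtain ⟨h1, h2⟩ := hsys
  intro x t hlt
  have hm := smooth_mom hu
  have hn := smooth_mom hv
  have hK := smooth_Kf hu hv
  -- pointwise derivative facts
  have dmx := hd1 hm x t
  have dnx := hd1 hn x t
  have dKx := hd1 hK x t
  have dmt := hd2 hm x t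
  have dnt := hd2 hn x t
  -- product rules for the fluxes appearing in the system
  have pm : pd1 (fun x t => mom u x t * (u x t * v x t - pd1 u x t * pd1 v x t)) x t
      = pd1 (mom u) x t * Kf u v x t + mom u x t * pd1 (Kf u v) x t :=
    (dmx.mul dKx).deriv
  have pn : pd1 (fun x t => mom v x t * (u x t * v x t - pd1 u x t * pd1 v x t)) x t
      = pd1 (mom v) x t * Kf u v x t + mom v x t * pd1 (Kf u v) x t :=
    (dnx.mul dKx).deriv
  have e1 := h1 x t
  have e2 := h2 x t
  rw [Eq1] at e1
  rw [Eq2] at e2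
  rw [pm] at e1
  rw [pn] at e2
  -- positivity facts
  have hpos : 0 < -(mom u x t * mom v x t) := by linarith
  have hSpos : 0 < Real.sqrt (-(mom u x t * mom v x t)) := Real.sqrt_pos.mpr hpos
  have hSne : Real.sqrt (-(mom u x t * mom v x t)) ≠ 0 := ne_of_gt hSpos
  have hS2 : Real.sqrt (-(mom u x t * mom v x t)) * Real.sqrt (-(mom u x t * mom v x t))
      = -(mom u x t * mom v x t) := Real.mul_self_sqrt hpos.le
  -- time derivative of sqrt(-mn)
  have hprod_t : HasDerivAt (fun s => -(mom u x s * mom v x s))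
      (-(pd2 (mom u) x t * mom v x t + mom u x t * pd2 (mom v) x t)) t :=
    (dmt.mul dnt).neg
  have hsqrt := Real.hasDerivAt_sqrt (ne_of_gt hpos)
  have hL : HasDerivAt (fun s => Real.sqrt (-(mom u x s * mom v x s)))
      (1 / (2 * Real.sqrt (-(mom u x t * mom v x t))) *
        -(pd2 (mom u) x t * mom v x t + mom u x t * pd2 (mom v) x t)) t :=
    hsqrt.comp t hprod_t
  -- spatial derivative of the flux
  have hprod_x : HasDerivAt (fun y => -(mom u y t * mom v y t))
      (-(pd1 (mom u) x t * mom v x t + mom u x t * pd1 (mom v) x t)) x :=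
    (dmx.mul dnx).neg
  have hsq2 : HasDerivAt (fun y => Real.sqrt (-(mom u y t * mom v y t)))
      (1 / (2 * Real.sqrt (-(mom u x t * mom v x t))) *
        -(pd1 (mom u) x t * mom v x t + mom u x t * pd1 (mom v) x t)) x :=
    hsqrt.comp x hprod_x
  have hR : HasDerivAt (fun y =>
      (1 / 2) * Real.sqrt (-(mom u y t * mom v y t)) *
        (u y t * v y t - pd1 u y t * pd1 v y t))
      ((1 / 2) * (1 / (2 * Real.sqrt (-(mom u x t * mom v x t))) *
          -(pd1 (mom u) x t * mom v x t + mom u x t * pd1 (mom v) x t)) * Kf u v x t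
        + (1 / 2) * Real.sqrt (-(mom u x t * mom v x t)) * pd1 (Kf u v) x t) x :=
    (hsq2.const_mul (1 / 2)).mul dKx
  rw [hL.deriv, hR.deriv, e1, e2]
  field_simp
  linear_combination (-2 * pd1 (Kf u v) x t) * hS2
end
end

section
/- Under the reduction v = -2 (so n = -2), the second component equation of the system is automatically satisfied and the first component equation m_t = bu_x + ½[m(uv - u_x v_x)]_x - ½ m(u v_x - u_x v) reduces exactly to the Camassa–Holm equation m_t - bu_x + 2mu_x + m_x u = 0 with m = u - u_xx. -/
noncomputable section

/-- Under the reduction `v = -2` (so `n = -2`), the second component equation of the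
two-component cubic system holds automatically, and the first component equation is
exactly the Camassa–Holm equation `m_t - b u_x + 2 m u_x + m_x u = 0`, `m = u - u_xx`. -/
theorem reduction_to_CamassaHolm (b : ℝ) (u : ℝ → ℝ → ℝ)
    (hu : ContDiff ℝ (⊤ : ℕ∞) (Function.uncurry u)) :
    (∀ x t : ℝ, Eq2 b u (fun _ _ => -2) x t) ∧
    ((∀ x t : ℝ, Eq1 b u (fun _ _ => -2) x t) ↔
      (∀ x t : ℝ, pd2 (mom u) x t - b * pd1 u x t
        + 2 * mom u x t * pd1 u x t + pd1 (mom u) x t * u x t = 0)) := by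
  have hg : ∀ t, ContDiff ℝ ((⊤ : ℕ∞) : WithTop ℕ∞) (fun y => u y t) := fun t =>
    (hu.of_le (by simp)).comp (contDiff_id.prodMk contDiff_const)
  have hgd : ∀ t, Differentiable ℝ (fun y => u y t) := fun t => (hg t).differentiable (by simp)
  have hg1 : ∀ t, ContDiff ℝ ((⊤ : ℕ∞) : WithTop ℕ∞) (fun y => pd1 u y t) := by
    intro t
    simpa [pd1] using (contDiff_infty_iff_deriv.mp (hg t)).2
  have hg2 : ∀ t, ContDiff ℝ ((⊤ : ℕ∞) : WithTop ℕ∞) (fun y => pd1 (pd1 u) y t) := by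
    intro t
    simpa [pd1] using (contDiff_infty_iff_deriv.mp (hg1 t)).2
  have hmd : ∀ t, Differentiable ℝ (fun y => mom u y t) := fun t =>
    (hgd t).sub ((hg2 t).differentiable (by simp))
  have hv1 : pd1 (fun _ _ => (-2:ℝ)) = fun _ _ => 0 := by
    funext x t; simp [pd1]
  have hmv : mom (fun _ _ => (-2:ℝ)) = fun _ _ => -2 := by
    funext x t; simp [mom, pd1]
  constructor
  · intro x t
    unfold Eq2
    have h1 : (fun x t => mom (fun _ _ => (-2:ℝ)) x t *
        (u x t * (fun (_ _ : ℝ) => (-2:ℝ)) x t - pd1 u x t * pd1 (fun _ _ => (-2:ℝ)) x t))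
        = fun x t => (4:ℝ) * u x t := by
      funext y s; simp [hmv, hv1]; ring
    rw [h1]
    have h2 : pd1 (fun x t => (4:ℝ) * u x t) x t = 4 * pd1 u x t := by
      show deriv (fun y => (4:ℝ) * u y t) x = _
      rw [deriv_const_mul _ (hgd t x)]; rfl
    rw [h2, hmv, hv1]
    simp [pd2, pd1]
    ring
  · have hkey : ∀ x t, pd1 (fun x t => mom u x t *
        (u x t * (fun (_ _ : ℝ) => (-2:ℝ)) x t - pd1 u x t * pd1 (fun _ _ => (-2:ℝ)) x t)) x t
        = -2 * (pd1 (mom u) x t * u x t + mom u x t * pd1 u x t) := by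
      intro x t
      have h1 : (fun x t => mom u x t *
          (u x t * (fun (_ _ : ℝ) => (-2:ℝ)) x t - pd1 u x t * pd1 (fun _ _ => (-2:ℝ)) x t))
          = fun x t => (-2:ℝ) * (mom u x t * u x t) := by
        funext y s; simp [hv1]; ring
      rw [h1]
      show deriv (fun y => (-2:ℝ) * (mom u y t * u y t)) x = _
      rw [deriv_const_mul (d := fun y => mom u y t * u y t) _ ((hmd t x).mul (hgd t x)), deriv_fun_mul (hmd t x) (hgd t x)]
      rfl
    constructor
    · intro h x t
      have := h x t
      unfold Eq1 at this
      rw [hkey x t, hv1] at this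
      simp only at this
      linarith
    · intro h x t
      have := h x t
      unfold Eq1
      rw [hkey x t, hv1]
      simp only
      linarith
end
end

section
/- For the two-peakon ODE system p₁' = ½p₁(p₁r₂ - p₂r₁) sgn(q₁-q₂) e^{-|q₁-q₂|}, p₂' = ½p₂(p₂r₁ - p₁r₂) sgn(q₂-q₁) e^{-|q₂-q₁|}, r₁' = -½r₁(p₁r₂ - p₂r₁) sgn(q₁-q₂) e^{-|q₁-q₂|}, r₂' = -½r₂(p₂r₁ - p₁r₂) sgn(q₂-q₁) e^{-|q₂-q₁|}, the quantities p₁r₁, p₂r₂, and p₁/p₂ are first integrals: they are constant along any solution on an interval where q₁(t) ≠ q₂(t) and p₂ ≠ 0. -/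
/-! Writing `F` for the common rate `½ (p₁r₂ - p₂r₁) sgn(q₁ - q₂) e^{-|q₁ - q₂|}`, which is
invariant under exchanging the two peakons, the system reads `p₁' = p₁F`, `p₂' = p₂F`,
`r₁' = -r₁F`, `r₂' = -r₂F`. Hence `(p₁r₁)' = (p₂r₂)' = (p₁/p₂)' = 0`, and a function with
vanishing derivative on an interval is constant there. -/

open Set

theorem IsOpen.eq_of_hasDerivAt_zero {𝕜 G : Type*} [RCLike 𝕜] [NormedAddCommGroup G]
    [NormedSpace 𝕜 G] {f : 𝕜 → G} {s : Set 𝕜} (hs : IsOpen s) (hs' : IsPreconnected s)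
    (hf : ∀ x ∈ s, HasDerivAt f 0 x) {x y : 𝕜} (hx : x ∈ s) (hy : y ∈ s) : f x = f y :=
  hs.is_const_of_deriv_eq_zero hs' (fun z hz => (hf z hz).differentiableAt.differentiableWithinAt)
    (fun z hz => (hf z hz).deriv) hx hy

section Rates

variable {𝕜 : Type*} [NontriviallyNormedField 𝕜] {f g : 𝕜 → 𝕜} {c x : 𝕜}

theorem HasDerivAt.mul_of_opposite_rates (hf : HasDerivAt f (f x * c) x)
    (hg : HasDerivAt g (-(g x * c)) x) : HasDerivAt (fun y => f y * g y) 0 x :=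
  (hf.mul hg).congr_deriv (by ring)

theorem HasDerivAt.div_of_equal_rates (hf : HasDerivAt f (f x * c) x)
    (hg : HasDerivAt g (g x * c) x) (hgx : g x ≠ 0) : HasDerivAt (fun y => f y / g y) 0 x :=
  (hf.div hg hgx).congr_deriv (by field_simp; ring)

end Rates

noncomputable def peakonRate (p₁ p₂ r₁ r₂ q₁ q₂ : ℝ) : ℝ :=
  (1 / 2) * (p₁ * r₂ - p₂ * r₁) * Real.sign (q₁ - q₂) * Real.exp (-|q₁ - q₂|)

theorem peakonRate_swap (p₁ p₂ r₁ r₂ q₁ q₂ : ℝ) :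
    peakonRate p₂ p₁ r₂ r₁ q₂ q₁ = peakonRate p₁ p₂ r₁ r₂ q₁ q₂ := by
  rw [peakonRate, peakonRate, ← neg_sub q₁ q₂, Real.sign_neg, abs_neg]
  ring

theorem two_peakon_first_integrals_general (p₁ p₂ r₁ r₂ q₁ q₂ : ℝ → ℝ) (a b : ℝ)
    (hp₁ : ∀ t ∈ Set.Ioo a b, HasDerivAt p₁
      ((1 / 2) * p₁ t * (p₁ t * r₂ t - p₂ t * r₁ t) * Real.sign (q₁ t - q₂ t) *
        Real.exp (-|q₁ t - q₂ t|)) t)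
    (hp₂ : ∀ t ∈ Set.Ioo a b, HasDerivAt p₂
      ((1 / 2) * p₂ t * (p₂ t * r₁ t - p₁ t * r₂ t) * Real.sign (q₂ t - q₁ t) *
        Real.exp (-|q₂ t - q₁ t|)) t)
    (hr₁ : ∀ t ∈ Set.Ioo a b, HasDerivAt r₁
      (-(1 / 2) * r₁ t * (p₁ t * r₂ t - p₂ t * r₁ t) * Real.sign (q₁ t - q₂ t) *
        Real.exp (-|q₁ t - q₂ t|)) t)
    (hr₂ : ∀ t ∈ Set.Ioo a b, HasDerivAt r₂
      (-(1 / 2) * r₂ t * (p₂ t * r₁ t - p₁ t * r₂ t) * Real.sign (q₂ t - q₁ t) *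
        Real.exp (-|q₂ t - q₁ t|)) t)
    (hp2ne : ∀ t ∈ Set.Ioo a b, p₂ t ≠ 0) :
    ∀ s ∈ Set.Ioo a b, ∀ t ∈ Set.Ioo a b,
      p₁ s * r₁ s = p₁ t * r₁ t ∧ p₂ s * r₂ s = p₂ t * r₂ t ∧
        p₁ s / p₂ s = p₁ t / p₂ t := by
  set F := fun t => peakonRate (p₁ t) (p₂ t) (r₁ t) (r₂ t) (q₁ t) (q₂ t)
  have hp₁F : ∀ t ∈ Ioo a b, HasDerivAt p₁ (p₁ t * F t) t := fun t ht =>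
    (hp₁ t ht).congr_deriv (by simp only [F, peakonRate]; ring)
  have hr₁F : ∀ t ∈ Ioo a b, HasDerivAt r₁ (-(r₁ t * F t)) t := fun t ht =>
    (hr₁ t ht).congr_deriv (by simp only [F, peakonRate]; ring)
  have hp₂F : ∀ t ∈ Ioo a b, HasDerivAt p₂ (p₂ t * F t) t := fun t ht =>
    (hp₂ t ht).congr_deriv (by simp only [F]; rw [← peakonRate_swap, peakonRate]; ring)
  have hr₂F : ∀ t ∈ Ioo a b, HasDerivAt r₂ (-(r₂ t * F t)) t := fun t ht =>
    (hr₂ t ht).congr_deriv (by simp only [F]; rw [← peakonRate_swap, peakonRate]; ring)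
  intro s hs t ht
  have hconst := fun {f : ℝ → ℝ} (hf : ∀ x ∈ Ioo a b, HasDerivAt f 0 x) =>
    isOpen_Ioo.eq_of_hasDerivAt_zero isPreconnected_Ioo hf hs ht
  exact ⟨hconst fun x hx => (hp₁F x hx).mul_of_opposite_rates (hr₁F x hx),
    hconst fun x hx => (hp₂F x hx).mul_of_opposite_rates (hr₂F x hx),
    hconst fun x hx => (hp₁F x hx).div_of_equal_rates (hp₂F x hx) (hp2ne x hx)⟩

/-- For the two-peakon dynamical system of the two-component cubic Camassa–Holm equation
(`b = 0`), the quantities `p₁ r₁`, `p₂ r₂` and `p₁ / p₂` are first integrals: they are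
constant along any solution on an open interval where `q₁ ≠ q₂` and `p₂ ≠ 0`. -/
theorem two_peakon_first_integrals (p₁ p₂ r₁ r₂ q₁ q₂ : ℝ → ℝ) (a b : ℝ)
    (hp₁ : ∀ t ∈ Set.Ioo a b, HasDerivAt p₁
      ((1 / 2) * p₁ t * (p₁ t * r₂ t - p₂ t * r₁ t) * Real.sign (q₁ t - q₂ t) *
        Real.exp (-|q₁ t - q₂ t|)) t)
    (hp₂ : ∀ t ∈ Set.Ioo a b, HasDerivAt p₂
      ((1 / 2) * p₂ t * (p₂ t * r₁ t - p₁ t * r₂ t) * Real.sign (q₂ t - q₁ t) *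
        Real.exp (-|q₂ t - q₁ t|)) t)
    (hr₁ : ∀ t ∈ Set.Ioo a b, HasDerivAt r₁
      (-(1 / 2) * r₁ t * (p₁ t * r₂ t - p₂ t * r₁ t) * Real.sign (q₁ t - q₂ t) *
        Real.exp (-|q₁ t - q₂ t|)) t)
    (hr₂ : ∀ t ∈ Set.Ioo a b, HasDerivAt r₂
      (-(1 / 2) * r₂ t * (p₂ t * r₁ t - p₁ t * r₂ t) * Real.sign (q₂ t - q₁ t) *
        Real.exp (-|q₂ t - q₁ t|)) t)
    (hq : ∀ t ∈ Set.Ioo a b, q₁ t ≠ q₂ t)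
    (hp2ne : ∀ t ∈ Set.Ioo a b, p₂ t ≠ 0) :
    ∀ s ∈ Set.Ioo a b, ∀ t ∈ Set.Ioo a b,
      p₁ s * r₁ s = p₁ t * r₁ t ∧ p₂ s * r₂ s = p₂ t * r₂ t ∧
        p₁ s / p₂ s = p₁ t / p₂ t :=
  two_peakon_first_integrals_general p₁ p₂ r₁ r₂ q₁ q₂ a b hp₁ hp₂ hr₁ hr₂ hp2ne
end

section
/- The explicit functions p₁(t) = B exp((1/(2D))(D²A₁ - A₁) sgn(C₁) e^{-|C₁|} t), p₂ = p₁/D, r₁ = A₁/p₁, r₂ = A₁/p₂, q₁(t) = -[A₁/3 + (1/(2D))(D²A₁ + A₁)e^{-|C₁|}] t + C₁/2, q₂(t) = q₁(t) - C₁, with nonzero real constants B, C₁, D and A₁ ∈ ℝ, satisfy the two-peakon ODE system p₁' = ½p₁(p₁r₂ - p₂r₁)sgn(q₁-q₂)e^{-|q₁-q₂|}, p₂' = ½p₂(p₂r₁ - p₁r₂)sgn(q₂-q₁)e^{-|q₂-q₁|}, q₁' = -⅓p₁r₁ - ½(p₁r₂ + p₂r₁)e^{-|q₁-q₂|}, q₂'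 = -⅓p₂r₂ - ½(p₁r₂ + p₂r₁)e^{-|q₂-q₁|}, r₁' = -½r₁(p₁r₂-p₂r₁)sgn(q₁-q₂)e^{-|q₁-q₂|}, r₂' = -½r₂(p₂r₁-p₁r₂)sgn(q₂-q₁)e^{-|q₂-q₁|}. -/
/-!
All four mixed products `pᵢ rⱼ` are constant (`p₁r₁ = p₂r₂ = A₁`, `p₁r₂ = A₁D`, `p₂r₁ = A₁/D`)
and so is the separation `q₁ - q₂ = C₁`. The system therefore collapses to `pᵢ' = k pᵢ`,
`rᵢ' = -k rᵢ` and `qᵢ' = v` for constants `k`, `v`, which the exponentials and the linear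
functions of the statement solve.
-/

open Real

theorem hasDerivAt_const_mul_exp_mul (B k t : ℝ) :
    HasDerivAt (fun s => B * exp (k * s)) (k * (B * exp (k * t))) t := by
  refine ((((hasDerivAt_id t).const_mul k).exp).const_mul B).congr_deriv ?_
  simp only [id, mul_one]
  ring

theorem hasDerivAt_const_mul_add (v c t : ℝ) : HasDerivAt (fun s => v * s + c) v t := by
  simpa using ((hasDerivAt_id t).const_mul v).add_const c

theorem HasDerivAt.const_div_of_eq_mul {f : ℝ → ℝ} {k t : ℝ} (A : ℝ)
    (hf : HasDerivAt f (k * f t) t) (hf0 : f t ≠ 0) :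
    HasDerivAt (fun s => A / f s) (-k * (A / f t)) t := by
  refine ((hasDerivAt_const t A).div hf hf0).congr_deriv ?_
  field_simp
  ring

theorem two_peakon_explicit_solution_equal_constants_general (A₁ B C₁ D : ℝ)
    (hB : B ≠ 0) (hD : D ≠ 0) :
    let p₁ : ℝ → ℝ := fun t =>
      B * Real.exp ((1 / (2 * D)) * (D ^ 2 * A₁ - A₁) * Real.sign C₁ * Real.exp (-|C₁|) * t)
    let p₂ : ℝ → ℝ := fun t => p₁ t / D
    let r₁ : ℝ → ℝ := fun t => A₁ / p₁ t
    let r₂ : ℝ → ℝ := fun t => A₁ / p₂ t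
    let q₁ : ℝ → ℝ := fun t =>
      -((1 / 3) * A₁ + (1 / (2 * D)) * (D ^ 2 * A₁ + A₁) * Real.exp (-|C₁|)) * t + C₁ / 2
    let q₂ : ℝ → ℝ := fun t => q₁ t - C₁
    ∀ t : ℝ,
      HasDerivAt p₁ ((1 / 2) * p₁ t * (p₁ t * r₂ t - p₂ t * r₁ t) *
        Real.sign (q₁ t - q₂ t) * Real.exp (-|q₁ t - q₂ t|)) t ∧
      HasDerivAt p₂ ((1 / 2) * p₂ t * (p₂ t * r₁ t - p₁ t * r₂ t) *
        Real.sign (q₂ t - q₁ t) * Real.exp (-|q₂ t - q₁ t|)) t ∧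
      HasDerivAt q₁ (-(1 / 3) * (p₁ t * r₁ t)
        - (1 / 2) * (p₁ t * r₂ t + p₂ t * r₁ t) * Real.exp (-|q₁ t - q₂ t|)) t ∧
      HasDerivAt q₂ (-(1 / 3) * (p₂ t * r₂ t)
        - (1 / 2) * (p₁ t * r₂ t + p₂ t * r₁ t) * Real.exp (-|q₂ t - q₁ t|)) t ∧
      HasDerivAt r₁ (-(1 / 2) * r₁ t * (p₁ t * r₂ t - p₂ t * r₁ t) *
        Real.sign (q₁ t - q₂ t) * Real.exp (-|q₁ t - q₂ t|)) t ∧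
      HasDerivAt r₂ (-(1 / 2) * r₂ t * (p₂ t * r₁ t - p₁ t * r₂ t) *
        Real.sign (q₂ t - q₁ t) * Real.exp (-|q₂ t - q₁ t|)) t := by
  intro p₁ p₂ r₁ r₂ q₁ q₂ t
  set k := 1 / (2 * D) * (D ^ 2 * A₁ - A₁) * Real.sign C₁ * Real.exp (-|C₁|) with hk
  set v := -((1 / 3) * A₁ + (1 / (2 * D)) * (D ^ 2 * A₁ + A₁) * Real.exp (-|C₁|)) with hv
  have hk' : k = 1 / 2 * (A₁ * D - A₁ / D) * Real.sign C₁ * Real.exp (-|C₁|) := by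
    rw [hk]; field_simp
  have hv' : v = -(1 / 3) * A₁ - 1 / 2 * (A₁ * D + A₁ / D) * Real.exp (-|C₁|) := by
    rw [hv]; field_simp; ring
  have hp₁0 : p₁ t ≠ 0 := mul_ne_zero hB (exp_ne_zero _)
  have hp₂0 : p₂ t ≠ 0 := div_ne_zero hp₁0 hD
  have hp₁ : HasDerivAt p₁ (k * p₁ t) t := hasDerivAt_const_mul_exp_mul B k t
  have hp₂ : HasDerivAt p₂ (k * p₂ t) t := by simpa only [mul_div_assoc] using hp₁.div_const D
  have hr₁ : HasDerivAt r₁ (-k * r₁ t) t := hp₁.const_div_of_eq_mul A₁ hp₁0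
  have hr₂ : HasDerivAt r₂ (-k * r₂ t) t := hp₂.const_div_of_eq_mul A₁ hp₂0
  have hq₁ : HasDerivAt q₁ v t := hasDerivAt_const_mul_add v (C₁ / 2) t
  have hq₂ : HasDerivAt q₂ v t := hq₁.sub_const C₁
  have h₁₁ : p₁ t * r₁ t = A₁ := mul_div_cancel₀ A₁ hp₁0
  have h₂₂ : p₂ t * r₂ t = A₁ := mul_div_cancel₀ A₁ hp₂0
  have h₁₂ : p₁ t * r₂ t = A₁ * D := by simp only [p₂, r₂]; field_simp
  have h₂₁ : p₂ t * r₁ t = A₁ / D := by simp only [p₂, r₁]; field_simp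
  have hq₁₂ : q₁ t - q₂ t = C₁ := sub_sub_cancel _ _
  have hq₂₁ : q₂ t - q₁ t = -C₁ := by rw [← neg_sub, hq₁₂]
  refine ⟨hp₁.congr_deriv ?_, hp₂.congr_deriv ?_, hq₁.congr_deriv ?_, hq₂.congr_deriv ?_,
    hr₁.congr_deriv ?_, hr₂.congr_deriv ?_⟩ <;>
  simp only [hq₁₂, hq₂₁, h₁₁, h₂₂, h₁₂, h₂₁, abs_neg, Real.sign_neg, hk', hv'] <;>
  ring

/-- Equal-constants (`A₁ = A₂`) explicit two-peakon solution of the two-peakon dynamical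
system of the two-component cubic Camassa–Holm equation with `b = 0`. -/
theorem two_peakon_explicit_solution_equal_constants (A₁ B C₁ D : ℝ)
    (hB : B ≠ 0) (hC : C₁ ≠ 0) (hD : D ≠ 0) :
    let p₁ : ℝ → ℝ := fun t =>
      B * Real.exp ((1 / (2 * D)) * (D ^ 2 * A₁ - A₁) * Real.sign C₁ * Real.exp (-|C₁|) * t)
    let p₂ : ℝ → ℝ := fun t => p₁ t / D
    let r₁ : ℝ → ℝ := fun t => A₁ / p₁ t
    let r₂ : ℝ → ℝ := fun t => A₁ / p₂ t
    let q₁ : ℝ → ℝ := fun t =>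
      -((1 / 3) * A₁ + (1 / (2 * D)) * (D ^ 2 * A₁ + A₁) * Real.exp (-|C₁|)) * t + C₁ / 2
    let q₂ : ℝ → ℝ := fun t => q₁ t - C₁
    ∀ t : ℝ,
      HasDerivAt p₁ ((1 / 2) * p₁ t * (p₁ t * r₂ t - p₂ t * r₁ t) *
        Real.sign (q₁ t - q₂ t) * Real.exp (-|q₁ t - q₂ t|)) t ∧
      HasDerivAt p₂ ((1 / 2) * p₂ t * (p₂ t * r₁ t - p₁ t * r₂ t) *
        Real.sign (q₂ t - q₁ t) * Real.exp (-|q₂ t - q₁ t|)) t ∧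
      HasDerivAt q₁ (-(1 / 3) * (p₁ t * r₁ t)
        - (1 / 2) * (p₁ t * r₂ t + p₂ t * r₁ t) * Real.exp (-|q₁ t - q₂ t|)) t ∧
      HasDerivAt q₂ (-(1 / 3) * (p₂ t * r₂ t)
        - (1 / 2) * (p₁ t * r₂ t + p₂ t * r₁ t) * Real.exp (-|q₂ t - q₁ t|)) t ∧
      HasDerivAt r₁ (-(1 / 2) * r₁ t * (p₁ t * r₂ t - p₂ t * r₁ t) *
        Real.sign (q₁ t - q₂ t) * Real.exp (-|q₁ t - q₂ t|)) t ∧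
      HasDerivAt r₂ (-(1 / 2) * r₂ t * (p₂ t * r₁ t - p₁ t * r₂ t) *
        Real.sign (q₂ t - q₁ t) * Real.exp (-|q₂ t - q₁ t|)) t :=
  two_peakon_explicit_solution_equal_constants_general A₁ B C₁ D hB hD
end

section
/- Let A₁ ≠ A₂ be nonzero reals, D ≠ 0, B ≠ 0. Then on any interval not containing t = 0, the functions p₁(t) = B exp(3(A₂D² - A₁)/(2D(A₁-A₂)) · e^{-|A₁-A₂||t|/3}), p₂ = p₁/D, r₁ = A₁/p₁, r₂ = A₂/p₂, q₁(t) = -(A₁/3)t + Γ(t), q₂(t) = -(A₂/3)t + Γ(t), where Γ(t) = (3(A₂D² + A₁)/(2D(A₁-A₂))) sgn((A₁-A₂)t)(e^{-|A₁-A₂||t|/3} - 1), solve the two-peakon ODE system of the dispersionless two-component cubic Camassa–Holm equation. -/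
/-!
Away from `t = 0` the sign `σ = sgn((A₁ - A₂) t)` is locally constant, so near `t` we have
`|(A₁ - A₂) s| = σ (A₁ - A₂) s`: the decay factor `e^{-|A₁ - A₂||s|/3}` is an ordinary
exponential there and `Γ` is a constant multiple of it plus a constant. The products `pᵢ rⱼ` are
constant and `q₁ - q₂ = -(A₁ - A₂) t / 3`, so every right-hand side of the system is an explicit
multiple of the decay factor. Both `p₁` and `p₂` have logarithmic derivative `growthRate`, and
`rᵢ = Aᵢ / pᵢ` has its negative; with `σ² = 1` each equation becomes a rational identity.
-/

noncomputable section

open Filter Topology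

namespace Real

theorem sign_mul_self_eq_abs (x : ℝ) : sign x * x = |x| := by
  rcases lt_trichotomy x 0 with hx | rfl | hx
  · rw [sign_of_neg hx, abs_of_neg hx, neg_one_mul]
  · rw [mul_zero, abs_zero]
  · rw [sign_of_pos hx, abs_of_pos hx, one_mul]

theorem sign_mul_sign_self_of_ne_zero {x : ℝ} (hx : x ≠ 0) : sign x * sign x = 1 := by
  rcases sign_apply_eq_of_ne_zero x hx with h | h <;> rw [h] <;> norm_num

theorem sign_div_of_pos (x : ℝ) {c : ℝ} (hc : 0 < c) : sign (x / c) = sign x := by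
  rcases lt_trichotomy x 0 with hx | rfl | hx
  · rw [sign_of_neg hx, sign_of_neg (div_neg_of_neg_of_pos hx hc)]
  · rw [zero_div]
  · rw [sign_of_pos hx, sign_of_pos (div_pos hx hc)]

theorem eventually_sign_eq {x : ℝ} (hx : x ≠ 0) : ∀ᶠ y in 𝓝 x, sign y = sign x := by
  rcases hx.lt_or_gt with hx | hx
  · filter_upwards [Iio_mem_nhds hx] with y hy
    rw [sign_of_neg hy, sign_of_neg hx]
  · filter_upwards [Ioi_mem_nhds hx] with y hy
    rw [sign_of_pos hy, sign_of_pos hx]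

end Real

theorem HasDerivAt.const_div_of_logDeriv {f : ℝ → ℝ} {x L : ℝ} (c : ℝ)
    (hf : HasDerivAt f (f x * L) x) (hx : f x ≠ 0) :
    HasDerivAt (fun y => c / f y) (-(c / f x) * L) x :=
  ((hasDerivAt_const x c).div hf hx).congr_deriv (by field_simp; ring)

namespace TwoPeakonSolution

open Real

variable (A₁ A₂ B D : ℝ)

def decay (t : ℝ) : ℝ := exp (-|A₁ - A₂| * |t| / 3)

def p₁ (t : ℝ) : ℝ := B * exp (3 * (A₂ * D ^ 2 - A₁) / (2 * D * (A₁ - A₂)) * decay A₁ A₂ t)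

def p₂ (t : ℝ) : ℝ := p₁ A₁ A₂ B D t / D

def r₁ (t : ℝ) : ℝ := A₁ / p₁ A₁ A₂ B D t

def r₂ (t : ℝ) : ℝ := A₂ / p₂ A₁ A₂ B D t

def Γ (t : ℝ) : ℝ :=
  3 * (A₂ * D ^ 2 + A₁) / (2 * D * (A₁ - A₂)) * sign ((A₁ - A₂) * t) * (decay A₁ A₂ t - 1)

def q₁ (t : ℝ) : ℝ := -(A₁ / 3) * t + Γ A₁ A₂ D t

def q₂ (t : ℝ) : ℝ := -(A₂ / 3) * t + Γ A₁ A₂ D t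

def growthRate (t : ℝ) : ℝ :=
  -(A₂ * D ^ 2 - A₁) / (2 * D) * sign ((A₁ - A₂) * t) * decay A₁ A₂ t

local notation "P₁" => p₁ A₁ A₂ B D
local notation "P₂" => p₂ A₁ A₂ B D
local notation "R₁" => r₁ A₁ A₂ B D
local notation "R₂" => r₂ A₁ A₂ B D
local notation "Q₁" => q₁ A₁ A₂ D
local notation "Q₂" => q₂ A₁ A₂ D

variable {A₁ A₂ B D} {t : ℝ}

theorem p₁_ne_zero (hB : B ≠ 0) (t : ℝ) : P₁ t ≠ 0 :=
  mul_ne_zero hB (exp_ne_zero _)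

theorem p₂_ne_zero (hB : B ≠ 0) (hD : D ≠ 0) (t : ℝ) : P₂ t ≠ 0 :=
  div_ne_zero (p₁_ne_zero hB t) hD

theorem p₁_mul_r₁ (hB : B ≠ 0) (t : ℝ) : P₁ t * R₁ t = A₁ :=
  mul_div_cancel₀ _ (p₁_ne_zero hB t)

theorem p₂_mul_r₂ (hB : B ≠ 0) (hD : D ≠ 0) (t : ℝ) : P₂ t * R₂ t = A₂ :=
  mul_div_cancel₀ _ (p₂_ne_zero hB hD t)

theorem p₁_mul_r₂ (hB : B ≠ 0) (hD : D ≠ 0) (t : ℝ) : P₁ t * R₂ t = A₂ * D := by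
  have : P₁ t ≠ 0 := p₁_ne_zero hB t
  rw [r₂, p₂]
  field_simp

theorem p₂_mul_r₁ (hB : B ≠ 0) (t : ℝ) : P₂ t * R₁ t = A₁ / D := by
  have : P₁ t ≠ 0 := p₁_ne_zero hB t
  rw [r₁, p₂]
  field_simp

theorem q₁_sub_q₂ (t : ℝ) : Q₁ t - Q₂ t = -((A₁ - A₂) * t) / 3 := by
  rw [q₁, q₂]
  ring

theorem sign_q₁_sub_q₂ (t : ℝ) : sign (Q₁ t - Q₂ t) = -sign ((A₁ - A₂) * t) := by
  rw [q₁_sub_q₂, sign_div_of_pos _ three_pos, sign_neg]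

theorem sign_q₂_sub_q₁ (t : ℝ) : sign (Q₂ t - Q₁ t) = sign ((A₁ - A₂) * t) := by
  rw [← neg_sub, sign_neg, sign_q₁_sub_q₂, neg_neg]

theorem exp_neg_abs_q₁_sub_q₂ (t : ℝ) : exp (-|Q₁ t - Q₂ t|) = decay A₁ A₂ t := by
  rw [q₁_sub_q₂, decay, abs_div, abs_neg, abs_mul, abs_of_pos (three_pos : (0 : ℝ) < 3)]
  ring_nf

theorem exp_neg_abs_q₂_sub_q₁ (t : ℝ) : exp (-|Q₂ t - Q₁ t|) = decay A₁ A₂ t := by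
  rw [abs_sub_comm]
  exact exp_neg_abs_q₁_sub_q₂ t

theorem eventually_sign_mul_eq (hA : A₁ ≠ A₂) (ht : t ≠ 0) :
    ∀ᶠ s in 𝓝 t, sign ((A₁ - A₂) * s) = sign ((A₁ - A₂) * t) :=
  ((continuous_const_mul _).tendsto t).eventually
    (eventually_sign_eq (mul_ne_zero (sub_ne_zero.mpr hA) ht))

theorem hasDerivAt_decay (hA : A₁ ≠ A₂) (ht : t ≠ 0) :
    HasDerivAt (decay A₁ A₂) (-(sign ((A₁ - A₂) * t) * (A₁ - A₂)) / 3 * decay A₁ A₂ t) t := by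
  have hbranch :
      decay A₁ A₂ =ᶠ[𝓝 t] fun s => exp (-(sign ((A₁ - A₂) * t) * (A₁ - A₂)) / 3 * s) := by
    filter_upwards [eventually_sign_mul_eq hA ht] with s hs
    rw [decay, neg_mul, ← abs_mul, ← sign_mul_self_eq_abs, hs]
    ring_nf
  refine (((hasDerivAt_id' t).const_mul _).exp.congr_of_eventuallyEq hbranch).congr_deriv ?_
  rw [hbranch.eq_of_nhds]
  ring

theorem hasDerivAt_Γ (hA : A₁ ≠ A₂) (hD : D ≠ 0) (ht : t ≠ 0) :
    HasDerivAt (Γ A₁ A₂ D) (-(A₂ * D ^ 2 + A₁) / (2 * D) * decay A₁ A₂ t) t := by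
  have hk : A₁ - A₂ ≠ 0 := sub_ne_zero.mpr hA
  have hσ := sign_mul_sign_self_of_ne_zero (mul_ne_zero hk ht)
  have hbranch : Γ A₁ A₂ D =ᶠ[𝓝 t] fun s => 3 * (A₂ * D ^ 2 + A₁) / (2 * D * (A₁ - A₂)) *
      sign ((A₁ - A₂) * t) * (decay A₁ A₂ s - 1) := by
    filter_upwards [eventually_sign_mul_eq hA ht] with s hs
    rw [Γ, hs]
  refine ((((hasDerivAt_decay hA ht).sub_const 1).const_mul _).congr_of_eventuallyEq
    hbranch).congr_deriv ?_
  field_simp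
  linear_combination (-(A₂ * D ^ 2 + A₁) * decay A₁ A₂ t) * hσ

theorem hasDerivAt_p₁_self_mul_growthRate (hA : A₁ ≠ A₂) (hD : D ≠ 0) (ht : t ≠ 0) :
    HasDerivAt P₁ (P₁ t * growthRate A₁ A₂ D t) t := by
  have hk : A₁ - A₂ ≠ 0 := sub_ne_zero.mpr hA
  refine (((hasDerivAt_decay hA ht).const_mul _).exp.const_mul B).congr_deriv ?_
  rw [p₁, growthRate]
  field_simp

theorem hasDerivAt_p₂_self_mul_growthRate (hA : A₁ ≠ A₂) (hD : D ≠ 0) (ht : t ≠ 0) :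
    HasDerivAt P₂ (P₂ t * growthRate A₁ A₂ D t) t :=
  ((hasDerivAt_p₁_self_mul_growthRate hA hD ht).div_const D).congr_deriv (by rw [p₂]; ring)

theorem hasDerivAt_p₁ (hA : A₁ ≠ A₂) (hB : B ≠ 0) (hD : D ≠ 0) (ht : t ≠ 0) :
    HasDerivAt P₁ ((1 / 2) * P₁ t * (P₁ t * R₂ t - P₂ t * R₁ t) *
      sign (Q₁ t - Q₂ t) * exp (-|Q₁ t - Q₂ t|)) t := by
  rw [p₁_mul_r₂ hB hD, p₂_mul_r₁ hB, sign_q₁_sub_q₂, exp_neg_abs_q₁_sub_q₂]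
  refine (hasDerivAt_p₁_self_mul_growthRate hA hD ht).congr_deriv ?_
  rw [growthRate]
  field_simp

theorem hasDerivAt_p₂ (hA : A₁ ≠ A₂) (hB : B ≠ 0) (hD : D ≠ 0) (ht : t ≠ 0) :
    HasDerivAt P₂ ((1 / 2) * P₂ t * (P₂ t * R₁ t - P₁ t * R₂ t) *
      sign (Q₂ t - Q₁ t) * exp (-|Q₂ t - Q₁ t|)) t := by
  rw [p₁_mul_r₂ hB hD, p₂_mul_r₁ hB, sign_q₂_sub_q₁, exp_neg_abs_q₂_sub_q₁]
  refine (hasDerivAt_p₂_self_mul_growthRate hA hD ht).congr_deriv ?_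
  rw [growthRate]
  field_simp
  ring

theorem hasDerivAt_q₁ (hA : A₁ ≠ A₂) (hB : B ≠ 0) (hD : D ≠ 0) (ht : t ≠ 0) :
    HasDerivAt Q₁ (-(1 / 3) * (P₁ t * R₁ t)
      - (1 / 2) * (P₁ t * R₂ t + P₂ t * R₁ t) * exp (-|Q₁ t - Q₂ t|)) t := by
  rw [p₁_mul_r₁ hB, p₁_mul_r₂ hB hD, p₂_mul_r₁ hB, exp_neg_abs_q₁_sub_q₂]
  refine (((hasDerivAt_id' t).const_mul _).add (hasDerivAt_Γ hA hD ht)).congr_deriv ?_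
  field_simp
  ring

theorem hasDerivAt_q₂ (hA : A₁ ≠ A₂) (hB : B ≠ 0) (hD : D ≠ 0) (ht : t ≠ 0) :
    HasDerivAt Q₂ (-(1 / 3) * (P₂ t * R₂ t)
      - (1 / 2) * (P₁ t * R₂ t + P₂ t * R₁ t) * exp (-|Q₂ t - Q₁ t|)) t := by
  rw [p₂_mul_r₂ hB hD, p₁_mul_r₂ hB hD, p₂_mul_r₁ hB, exp_neg_abs_q₂_sub_q₁]
  refine (((hasDerivAt_id' t).const_mul _).add (hasDerivAt_Γ hA hD ht)).congr_deriv ?_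
  field_simp
  ring

theorem hasDerivAt_r₁ (hA : A₁ ≠ A₂) (hB : B ≠ 0) (hD : D ≠ 0) (ht : t ≠ 0) :
    HasDerivAt R₁ (-(1 / 2) * R₁ t * (P₁ t * R₂ t - P₂ t * R₁ t) *
      sign (Q₁ t - Q₂ t) * exp (-|Q₁ t - Q₂ t|)) t := by
  rw [p₁_mul_r₂ hB hD, p₂_mul_r₁ hB, sign_q₁_sub_q₂, exp_neg_abs_q₁_sub_q₂]
  refine ((hasDerivAt_p₁_self_mul_growthRate hA hD ht).const_div_of_logDeriv A₁
    (p₁_ne_zero hB t)).congr_deriv ?_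
  rw [r₁, growthRate]
  field_simp

theorem hasDerivAt_r₂ (hA : A₁ ≠ A₂) (hB : B ≠ 0) (hD : D ≠ 0) (ht : t ≠ 0) :
    HasDerivAt R₂ (-(1 / 2) * R₂ t * (P₂ t * R₁ t - P₁ t * R₂ t) *
      sign (Q₂ t - Q₁ t) * exp (-|Q₂ t - Q₁ t|)) t := by
  rw [p₁_mul_r₂ hB hD, p₂_mul_r₁ hB, sign_q₂_sub_q₁, exp_neg_abs_q₂_sub_q₁]
  refine ((hasDerivAt_p₂_self_mul_growthRate hA hD ht).const_div_of_logDeriv A₂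
    (p₂_ne_zero hB hD t)).congr_deriv ?_
  rw [r₂, growthRate]
  field_simp
  ring

end TwoPeakonSolution

theorem two_peakon_explicit_solution_distinct_constants_general (A₁ A₂ B D : ℝ)
    (hA : A₁ ≠ A₂) (hB : B ≠ 0) (hD : D ≠ 0) :
    let p₁ : ℝ → ℝ := fun t =>
      B * Real.exp ((3 * (A₂ * D ^ 2 - A₁) / (2 * D * (A₁ - A₂))) *
        Real.exp (-|A₁ - A₂| * |t| / 3))
    let p₂ : ℝ → ℝ := fun t => p₁ t / D
    let r₁ : ℝ → ℝ := fun t => A₁ / p₁ t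
    let r₂ : ℝ → ℝ := fun t => A₂ / p₂ t
    let Γ : ℝ → ℝ := fun t =>
      (3 * (A₂ * D ^ 2 + A₁) / (2 * D * (A₁ - A₂))) * Real.sign ((A₁ - A₂) * t) *
        (Real.exp (-|A₁ - A₂| * |t| / 3) - 1)
    let q₁ : ℝ → ℝ := fun t => -(A₁ / 3) * t + Γ t
    let q₂ : ℝ → ℝ := fun t => -(A₂ / 3) * t + Γ t
    ∀ t : ℝ, t ≠ 0 →
      HasDerivAt p₁ ((1 / 2) * p₁ t * (p₁ t * r₂ t - p₂ t * r₁ t) *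
        Real.sign (q₁ t - q₂ t) * Real.exp (-|q₁ t - q₂ t|)) t ∧
      HasDerivAt p₂ ((1 / 2) * p₂ t * (p₂ t * r₁ t - p₁ t * r₂ t) *
        Real.sign (q₂ t - q₁ t) * Real.exp (-|q₂ t - q₁ t|)) t ∧
      HasDerivAt q₁ (-(1 / 3) * (p₁ t * r₁ t)
        - (1 / 2) * (p₁ t * r₂ t + p₂ t * r₁ t) * Real.exp (-|q₁ t - q₂ t|)) t ∧
      HasDerivAt q₂ (-(1 / 3) * (p₂ t * r₂ t)
        - (1 / 2) * (p₁ t * r₂ t + p₂ t * r₁ t) * Real.exp (-|q₂ t - q₁ t|)) t ∧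
      HasDerivAt r₁ (-(1 / 2) * r₁ t * (p₁ t * r₂ t - p₂ t * r₁ t) *
        Real.sign (q₁ t - q₂ t) * Real.exp (-|q₁ t - q₂ t|)) t ∧
      HasDerivAt r₂ (-(1 / 2) * r₂ t * (p₂ t * r₁ t - p₁ t * r₂ t) *
        Real.sign (q₂ t - q₁ t) * Real.exp (-|q₂ t - q₁ t|)) t := by
  intro p₁ p₂ r₁ r₂ Γ q₁ q₂ t ht
  open TwoPeakonSolution in
  exact ⟨hasDerivAt_p₁ hA hB hD ht, hasDerivAt_p₂ hA hB hD ht, hasDerivAt_q₁ hA hB hD ht,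
    hasDerivAt_q₂ hA hB hD ht, hasDerivAt_r₁ hA hB hD ht, hasDerivAt_r₂ hA hB hD ht⟩

/-- Distinct-constants (`A₁ ≠ A₂`) explicit two-peakon solution: away from the collision
time `t = 0`, the given explicit functions solve the two-peakon ODE system of the
dispersionless two-component cubic Camassa–Holm equation. -/
theorem two_peakon_explicit_solution_distinct_constants (A₁ A₂ B D : ℝ)
    (hA : A₁ ≠ A₂) (hA₁ : A₁ ≠ 0) (hA₂ : A₂ ≠ 0) (hB : B ≠ 0) (hD : D ≠ 0) :
    let p₁ : ℝ → ℝ := fun t =>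
      B * Real.exp ((3 * (A₂ * D ^ 2 - A₁) / (2 * D * (A₁ - A₂))) *
        Real.exp (-|A₁ - A₂| * |t| / 3))
    let p₂ : ℝ → ℝ := fun t => p₁ t / D
    let r₁ : ℝ → ℝ := fun t => A₁ / p₁ t
    let r₂ : ℝ → ℝ := fun t => A₂ / p₂ t
    let Γ : ℝ → ℝ := fun t =>
      (3 * (A₂ * D ^ 2 + A₁) / (2 * D * (A₁ - A₂))) * Real.sign ((A₁ - A₂) * t) *
        (Real.exp (-|A₁ - A₂| * |t| / 3) - 1)
    let q₁ : ℝ → ℝ := fun t => -(A₁ / 3) * t + Γ t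
    let q₂ : ℝ → ℝ := fun t => -(A₂ / 3) * t + Γ t
    ∀ t : ℝ, t ≠ 0 →
      HasDerivAt p₁ ((1 / 2) * p₁ t * (p₁ t * r₂ t - p₂ t * r₁ t) *
        Real.sign (q₁ t - q₂ t) * Real.exp (-|q₁ t - q₂ t|)) t ∧
      HasDerivAt p₂ ((1 / 2) * p₂ t * (p₂ t * r₁ t - p₁ t * r₂ t) *
        Real.sign (q₂ t - q₁ t) * Real.exp (-|q₂ t - q₁ t|)) t ∧
      HasDerivAt q₁ (-(1 / 3) * (p₁ t * r₁ t)
        - (1 / 2) * (p₁ t * r₂ t + p₂ t * r₁ t) * Real.exp (-|q₁ t - q₂ t|)) t ∧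
      HasDerivAt q₂ (-(1 / 3) * (p₂ t * r₂ t)
        - (1 / 2) * (p₁ t * r₂ t + p₂ t * r₁ t) * Real.exp (-|q₂ t - q₁ t|)) t ∧
      HasDerivAt r₁ (-(1 / 2) * r₁ t * (p₁ t * r₂ t - p₂ t * r₁ t) *
        Real.sign (q₁ t - q₂ t) * Real.exp (-|q₁ t - q₂ t|)) t ∧
      HasDerivAt r₂ (-(1 / 2) * r₂ t * (p₂ t * r₁ t - p₁ t * r₂ t) *
        Real.sign (q₂ t - q₁ t) * Real.exp (-|q₂ t - q₁ t|)) t :=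
  two_peakon_explicit_solution_distinct_constants_general A₁ A₂ B D hA hB hD
end
end

section
/- Along any solution of the complex two-peakon dynamical system, the moduli A₁² := p₁² + r₁² and A₂² := p₂² + r₂² are conserved: d/dt(p_j² + r_j²) = 0 for j = 1, 2. -/
/-! The right-hand sides of the `p_j`- and `r_j`-equations are `r_j S_j` and `-p_j S_j` for one
and the same interaction sum `S_j`, since swapping the two sign terms only flips the sign of each
summand. Hence `(p_j, r_j)` rotates, and `d/dt (p_j² + r_j²) = 2 p_j r_j S_j - 2 r_j p_j S_j = 0`. -/

theorem HasDerivAt.sq_add_sq_of_rotation {f g : ℝ → ℝ} {c t : ℝ}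
    (hf : HasDerivAt f (g t * c) t) (hg : HasDerivAt g (f t * -c) t) :
    HasDerivAt (fun s => f s ^ 2 + g s ^ 2) 0 t :=
  ((hf.fun_pow 2).fun_add (hg.fun_pow 2)).congr_deriv (by ring)

theorem Finset.sum_sum_mul_sub_mul_eq_neg {ι : Type*} [Fintype ι] (a b u v : ι → ℝ)
    (w : ι → ι → ℝ) :
    ∑ l, ∑ k, a l * b k * (u l - v k) * w l k = -∑ l, ∑ k, a l * b k * (v k - u l) * w l k := by
  simp only [← Finset.sum_neg_distrib]
  congr! 2 with l - k -
  ring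

theorem complex_two_peakon_moduli_conserved_general (p r q : Fin 2 → ℝ → ℝ)
    (hp : ∀ (j : Fin 2) (t : ℝ), HasDerivAt (p j)
      (r j t * ∑ l : Fin 2, ∑ k : Fin 2, p l t * r k t *
        (Real.sign (q j t - q k t) - Real.sign (q j t - q l t)) *
        Real.exp (-|q j t - q k t| - |q j t - q l t|)) t)
    (hr : ∀ (j : Fin 2) (t : ℝ), HasDerivAt (r j)
      (p j t * ∑ l : Fin 2, ∑ k : Fin 2, p l t * r k t *
        (Real.sign (q j t - q l t) - Real.sign (q j t - q k t)) *
        Real.exp (-|q j t - q k t| - |q j t - q l t|)) t) :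
    ∀ (j : Fin 2) (t : ℝ), HasDerivAt (fun s => (p j s) ^ 2 + (r j s) ^ 2) 0 t := by
  intro j t
  refine (hp j t).sq_add_sq_of_rotation ?_
  rw [← Finset.sum_sum_mul_sub_mul_eq_neg]
  exact hr j t

/-- Along any solution of the complex two-peakon dynamical system, the squared moduli
`p_j² + r_j²` (`j = 1, 2`) are conserved. -/
theorem complex_two_peakon_moduli_conserved (p r q : Fin 2 → ℝ → ℝ)
    (hp : ∀ (j : Fin 2) (t : ℝ), HasDerivAt (p j)
      (r j t * ∑ l : Fin 2, ∑ k : Fin 2, p l t * r k t *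
        (Real.sign (q j t - q k t) - Real.sign (q j t - q l t)) *
        Real.exp (-|q j t - q k t| - |q j t - q l t|)) t)
    (hr : ∀ (j : Fin 2) (t : ℝ), HasDerivAt (r j)
      (p j t * ∑ l : Fin 2, ∑ k : Fin 2, p l t * r k t *
        (Real.sign (q j t - q l t) - Real.sign (q j t - q k t)) *
        Real.exp (-|q j t - q k t| - |q j t - q l t|)) t)
    (hq : ∀ (j : Fin 2) (t : ℝ), HasDerivAt (q j)
      ((1 / 6) * ((p j t) ^ 2 + (r j t) ^ 2)
        - (1 / 2) * ∑ l : Fin 2, ∑ k : Fin 2, (p l t * p k t + r l t * r k t) *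
          (1 - Real.sign (q j t - q l t) * Real.sign (q j t - q k t)) *
          Real.exp (-|q j t - q l t| - |q j t - q k t|)) t) :
    ∀ (j : Fin 2) (t : ℝ), HasDerivAt (fun s => (p j s) ^ 2 + (r j s) ^ 2) 0 t :=
  complex_two_peakon_moduli_conserved_general p r q hp hr
end

section
/- Let A₁, A₂, A₃, A₄ be real constants with A₁² ≠ A₂², and define Γ₁(t) = (3A₁A₂cos(A₃-A₄)/|A₁²-A₂²|) sgn(t)(e^{-|A₁²-A₂²||t|/3} - 1) and Γ₂(t) = (3A₁A₂sin(A₃-A₄)/(A₁²-A₂²)) e^{-|A₁²-A₂²||t|/3}. Then on any interval not containing 0, the functions q₁ = -(A₁²/3)t + Γ₁, q₂ = -(A₂²/3)t + Γ₁, p₁ = A₁sin(Γ₂+A₃), p₂ = A₂sin(Γ₂+A₄), r₁ = A₁cos(Γ₂+A₃), r₂ = A₂cos(Γ₂+A₄) solve the complex two-peakon dynamical system. -/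
/-!
On the ansatz the pairs `(p j, r j)` rotate rigidly with the common phase `Γ₂`, so
`p₁ r₂ - p₂ r₁ = A₁ A₂ sin (A₃ - A₄)` and `p₁ p₂ + r₁ r₂ = A₁ A₂ cos (A₃ - A₄)` are constant,
and `q₁ - q₂ = -(A₁² - A₂²) t / 3` vanishes only at `t = 0`. Away from the collision the
double sums collapse to their off-diagonal terms, and the system reduces to the two scalar
equations
`Γ₂' = sgn (q₁ - q₂) e^{-|q₁ - q₂|} A₁ A₂ sin (A₃ - A₄)`,
`Γ₁' = -A₁ A₂ cos (A₃ - A₄) e^{-|q₁ - q₂|}`,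
which the explicit `Γ₁`, `Γ₂` satisfy because `sgn t` is locally constant for `t ≠ 0`.
-/

open Real

namespace Real

theorem sign_mul_self_of_ne_zero {r : ℝ} (hr : r ≠ 0) : sign r * sign r = 1 := by
  rcases sign_apply_eq_of_ne_zero r hr with h | h <;> rw [h] <;> norm_num

theorem abs_eq_sign_mul (r : ℝ) : |r| = sign r * r := by
  rcases lt_trichotomy r 0 with h | rfl | h
  · rw [abs_of_neg h, sign_of_neg h]; ring
  · simp
  · rw [abs_of_pos h, sign_of_pos h, one_mul]

theorem sign_mul (a b : ℝ) : sign (a * b) = sign a * sign b := by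
  rcases lt_trichotomy a 0 with ha | rfl | ha <;> rcases lt_trichotomy b 0 with hb | rfl | hb <;>
    simp [sign_of_neg, sign_of_pos, mul_pos_of_neg_of_neg, mul_neg_of_neg_of_pos,
      mul_neg_of_pos_of_neg, *]

theorem sign_sub_comm (a b : ℝ) : sign (a - b) = -sign (b - a) := by
  rw [← sign_neg, neg_sub]

theorem sign_eventuallyEq {t : ℝ} (ht : t ≠ 0) : sign =ᶠ[nhds t] fun _ => sign t := by
  rcases ht.lt_or_gt with h | h
  · filter_upwards [eventually_lt_nhds h] with x hx
    rw [sign_of_neg hx, sign_of_neg h]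
  · filter_upwards [eventually_gt_nhds h] with x hx
    rw [sign_of_pos hx, sign_of_pos h]

end Real

theorem hasDerivAt_mul_exp_neg_abs (a c : ℝ) {t : ℝ} (ht : t ≠ 0) :
    HasDerivAt (fun x => a * exp (-c * |x| / 3))
      (-(a * c / 3) * sign t * exp (-c * |t| / 3)) t := by
  have habs : HasDerivAt (|·|) (sign t) t := by
    rcases ht.lt_or_gt with h | h
    · rw [sign_of_neg h]; exact hasDerivAt_abs_neg h
    · rw [sign_of_pos h]; exact hasDerivAt_abs_pos h
  exact ((((habs.const_mul (-c)).div_const 3).exp).const_mul a).congr_deriv (by ring)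

theorem hasDerivAt_mul_sign_mul_exp_neg_abs_sub_one (a c : ℝ) {t : ℝ} (ht : t ≠ 0) :
    HasDerivAt (fun x => a * sign x * (exp (-c * |x| / 3) - 1)) (-(a * c / 3) * exp (-c * |t| / 3))
      t := by
  have hlocal := (hasDerivAt_mul_exp_neg_abs (a * sign t) c ht).sub_const (a * sign t)
  refine (hlocal.congr_of_eventuallyEq ?_).congr_deriv ?_
  · filter_upwards [sign_eventuallyEq ht] with x hx
    rw [hx]; ring
  linear_combination (-(a * c / 3) * exp (-c * |t| / 3)) * sign_mul_self_of_ne_zero ht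

theorem mul_sin_sq_add_mul_cos_sq (a x : ℝ) : (a * sin x) ^ 2 + (a * cos x) ^ 2 = a ^ 2 := by
  linear_combination a ^ 2 * sin_sq_add_cos_sq x

theorem mul_sin_mul_mul_cos_sub (a b x y : ℝ) :
    a * sin x * (b * cos y) - b * sin y * (a * cos x) = a * b * sin (x - y) := by
  rw [sin_sub]; ring

theorem mul_sin_mul_mul_sin_add (a b x y : ℝ) :
    a * sin x * (b * sin y) + a * cos x * (b * cos y) = a * b * cos (x - y) := by
  rw [cos_sub]; ring

section TwoPeakon

variable (P R Q : Fin 2 → ℝ)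

theorem twoPeakon_momentum_sum (j : Fin 2) :
    ∑ l : Fin 2, ∑ k : Fin 2, P l * R k * (sign (Q j - Q k) - sign (Q j - Q l)) *
        exp (-|Q j - Q k| - |Q j - Q l|) =
      sign (Q 0 - Q 1) * exp (-|Q 0 - Q 1|) * (P 0 * R 1 - P 1 * R 0) := by
  fin_cases j <;>
    simp only [Fin.zero_eta, Fin.mk_one, Fin.sum_univ_two, sign_sub_comm (Q 1),
      abs_sub_comm (Q 1), sub_self, sign_zero, abs_zero, neg_zero, sub_zero, zero_sub, exp_zero] <;>
    ring

theorem twoPeakon_momentum_sum_swap (j : Fin 2) :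
    ∑ l : Fin 2, ∑ k : Fin 2, P l * R k * (sign (Q j - Q l) - sign (Q j - Q k)) *
        exp (-|Q j - Q k| - |Q j - Q l|) =
      -(sign (Q 0 - Q 1) * exp (-|Q 0 - Q 1|) * (P 0 * R 1 - P 1 * R 0)) := by
  rw [← twoPeakon_momentum_sum, ← Finset.sum_neg_distrib]
  refine Finset.sum_congr rfl fun l _ => ?_
  rw [← Finset.sum_neg_distrib]
  refine Finset.sum_congr rfl fun k _ => ?_
  ring

theorem twoPeakon_position_field (hQ : Q 0 ≠ Q 1) (j : Fin 2) :
    (1 / 6) * (P j ^ 2 + R j ^ 2) - (1 / 2) * ∑ l : Fin 2, ∑ k : Fin 2,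
        (P l * P k + R l * R k) * (1 - sign (Q j - Q l) * sign (Q j - Q k)) *
          exp (-|Q j - Q l| - |Q j - Q k|) =
      -(P j ^ 2 + R j ^ 2) / 3 - (P 0 * P 1 + R 0 * R 1) * exp (-|Q 0 - Q 1|) := by
  have hsq := sign_mul_self_of_ne_zero (sub_ne_zero.mpr hQ)
  fin_cases j <;>
    simp only [Fin.zero_eta, Fin.mk_one, Fin.sum_univ_two, sign_sub_comm (Q 1),
      abs_sub_comm (Q 1), sub_self, sign_zero, abs_zero, neg_zero, sub_zero, zero_sub, exp_zero,
      mul_zero, neg_mul, mul_neg, neg_neg, hsq] <;>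
    ring

end TwoPeakon

/-- The explicit functions built from `Γ₁`, `Γ₂` solve the complex two-peakon dynamical
system away from the collision time `t = 0`, for real constants `A₁, …, A₄` with
`A₁² ≠ A₂²`. -/
theorem complex_two_peakon_explicit_solution (A₁ A₂ A₃ A₄ : ℝ) (hA : A₁ ^ 2 ≠ A₂ ^ 2) :
    let Γ₁ : ℝ → ℝ := fun t =>
      (3 * A₁ * A₂ * Real.cos (A₃ - A₄) / |A₁ ^ 2 - A₂ ^ 2|) * Real.sign t *
        (Real.exp (-|A₁ ^ 2 - A₂ ^ 2| * |t| / 3) - 1)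
    let Γ₂ : ℝ → ℝ := fun t =>
      (3 * A₁ * A₂ * Real.sin (A₃ - A₄) / (A₁ ^ 2 - A₂ ^ 2)) *
        Real.exp (-|A₁ ^ 2 - A₂ ^ 2| * |t| / 3)
    let p : Fin 2 → ℝ → ℝ :=
      ![fun t => A₁ * Real.sin (Γ₂ t + A₃), fun t => A₂ * Real.sin (Γ₂ t + A₄)]
    let r : Fin 2 → ℝ → ℝ :=
      ![fun t => A₁ * Real.cos (Γ₂ t + A₃), fun t => A₂ * Real.cos (Γ₂ t + A₄)]
    let q : Fin 2 → ℝ → ℝ :=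
      ![fun t => -(A₁ ^ 2 / 3) * t + Γ₁ t, fun t => -(A₂ ^ 2 / 3) * t + Γ₁ t]
    ∀ (j : Fin 2) (t : ℝ), t ≠ 0 →
      HasDerivAt (p j)
        (r j t * ∑ l : Fin 2, ∑ k : Fin 2, p l t * r k t *
          (Real.sign (q j t - q k t) - Real.sign (q j t - q l t)) *
          Real.exp (-|q j t - q k t| - |q j t - q l t|)) t ∧
      HasDerivAt (r j)
        (p j t * ∑ l : Fin 2, ∑ k : Fin 2, p l t * r k t *
          (Real.sign (q j t - q l t) - Real.sign (q j t - q k t)) *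
          Real.exp (-|q j t - q k t| - |q j t - q l t|)) t ∧
      HasDerivAt (q j)
        ((1 / 6) * ((p j t) ^ 2 + (r j t) ^ 2)
          - (1 / 2) * ∑ l : Fin 2, ∑ k : Fin 2, (p l t * p k t + r l t * r k t) *
            (1 - Real.sign (q j t - q l t) * Real.sign (q j t - q k t)) *
            Real.exp (-|q j t - q l t| - |q j t - q k t|)) t := by
  intro Γ₁ Γ₂ p r q j t ht
  have hD : A₁ ^ 2 - A₂ ^ 2 ≠ 0 := sub_ne_zero.mpr hA
  have hgap : q 0 t - q 1 t = -((A₁ ^ 2 - A₂ ^ 2) * t / 3) := by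
    simp only [q, Matrix.cons_val_zero, Matrix.cons_val_one]; ring
  have hQ : q 0 t ≠ q 1 t := by
    rw [← sub_ne_zero, hgap]; simp [hD, ht]
  have hsign : sign (q 0 t - q 1 t) = -(sign (A₁ ^ 2 - A₂ ^ 2) * sign t) := by
    rw [hgap, sign_neg, div_eq_mul_inv, sign_mul, sign_mul, sign_inv, sign_of_pos three_pos,
      mul_one]
  have habs : |q 0 t - q 1 t| = |A₁ ^ 2 - A₂ ^ 2| * |t| / 3 := by
    rw [hgap, abs_neg, abs_div, abs_mul, abs_of_pos (three_pos : (0 : ℝ) < 3)]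
  have hW : p 0 t * r 1 t - p 1 t * r 0 t = A₁ * A₂ * sin (A₃ - A₄) :=
    (mul_sin_mul_mul_cos_sub A₁ A₂ _ _).trans (by rw [add_sub_add_left_eq_sub])
  have hC : p 0 t * p 1 t + r 0 t * r 1 t = A₁ * A₂ * cos (A₃ - A₄) :=
    (mul_sin_mul_mul_sin_add A₁ A₂ _ _).trans (by rw [add_sub_add_left_eq_sub])
  have hΓ₂ : HasDerivAt Γ₂
      (sign (q 0 t - q 1 t) * exp (-|q 0 t - q 1 t|) * (p 0 t * r 1 t - p 1 t * r 0 t)) t := by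
    refine (hasDerivAt_mul_exp_neg_abs _ _ ht).congr_deriv ?_
    rw [hsign, habs, hW, abs_eq_sign_mul (A₁ ^ 2 - A₂ ^ 2)]
    field_simp
  have hΓ₁ : HasDerivAt Γ₁ (-(p 0 t * p 1 t + r 0 t * r 1 t) * exp (-|q 0 t - q 1 t|)) t := by
    refine (hasDerivAt_mul_sign_mul_exp_neg_abs_sub_one _ _ ht).congr_deriv ?_
    rw [habs, hC]
    field_simp
  rw [twoPeakon_momentum_sum (p · t) (r · t) (q · t),
    twoPeakon_momentum_sum_swap (p · t) (r · t) (q · t),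
    twoPeakon_position_field (p · t) (r · t) (q · t) hQ]
  match j with
  | 0 =>
    exact ⟨((hΓ₂.add_const A₃).sin.const_mul A₁).congr_deriv
        (by simp only [p, r, Matrix.cons_val_zero, Matrix.cons_val_one]; ring),
      ((hΓ₂.add_const A₃).cos.const_mul A₁).congr_deriv
        (by simp only [p, r, Matrix.cons_val_zero, Matrix.cons_val_one]; ring),
      (((hasDerivAt_id t).const_mul _).add hΓ₁).congr_deriv
        (by rw [show p 0 t ^ 2 + r 0 t ^ 2 = A₁ ^ 2 from mul_sin_sq_add_mul_cos_sq _ _]; ring)⟩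
  | 1 =>
    exact ⟨((hΓ₂.add_const A₄).sin.const_mul A₂).congr_deriv
        (by simp only [p, r, Matrix.cons_val_zero, Matrix.cons_val_one]; ring),
      ((hΓ₂.add_const A₄).cos.const_mul A₂).congr_deriv
        (by simp only [p, r, Matrix.cons_val_zero, Matrix.cons_val_one]; ring),
      (((hasDerivAt_id t).const_mul _).add hΓ₁).congr_deriv
        (by rw [show p 1 t ^ 2 + r 1 t ^ 2 = A₂ ^ 2 from mul_sin_sq_add_mul_cos_sq _ _]; ring)⟩
end
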